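/- For every integer n ≥ 1, the degree-n Legendre polynomial P_n has exactly n roots, all of which are real, simple (distinct), and lie in the open interval (−1, 1). -/

import Mathlib

/-- The Legendre polynomial of degree `n` on `[−1,1]`, via the Rodrigues formula
`P_n(y) = (1/(2^n n!)) (d/dy)^n [(y² − 1)^n]`. -/
noncomputable def legendreP (n : ℕ) (y : ℝ) : ℝ :=
  (1 / ((2 : ℝ) ^ n * (n.factorial : ℝ))) * iteratedDeriv n (fun z : ℝ => (z ^ 2 - 1) ^ n) y

/-!
Write `P_n = c_n · D^n (X² − 1)^n` with `c_n ≠ 0`. For `k < n` the polynomial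
`D^k (X² − 1)^n` still vanishes at `±1`, since `±1` are roots of multiplicity `n` of
`(X² − 1)^n`. So if it has `k` distinct roots in `(−1, 1)`, these together with `±1` cut
`[−1, 1]` into `k + 1` intervals, and Rolle's theorem gives `k + 1` distinct roots of
`D^(k+1) (X² − 1)^n` in `(−1, 1)`. Hence `P_n`, of degree `n`, has `n` distinct roots in
`(−1, 1)`; counting against the degree, these are all its roots and they are simple.
-/

open Polynomial

namespace Polynomial

theorem iteratedDeriv_eval {𝕜 : Type*} [NontriviallyNormedField 𝕜] (p : 𝕜[X]) (k : ℕ) :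
    iteratedDeriv k (fun x => p.eval x) = fun x => (derivative^[k] p).eval x := by
  induction k with
  | zero => simp
  | succ k ih =>
    ext x
    rw [iteratedDeriv_succ, ih, Function.iterate_succ_apply', Polynomial.deriv]

section IsAddTorsionFree

variable {R : Type*} [Semiring R] [IsAddTorsionFree R]

theorem natDegree_iterate_derivative_eq (p : R[X]) (k : ℕ) :
    (derivative^[k] p).natDegree = p.natDegree - k := by
  induction k with
  | zero => simp
  | succ k ih => rw [Function.iterate_succ_apply', natDegree_derivative, ih, Nat.sub_sub]

theorem iterate_derivative_ne_zero {p : R[X]} (hp : p ≠ 0) {k : ℕ} (hk : k ≤ p.natDegree) :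
    derivative^[k] p ≠ 0 := by
  cases k with
  | zero => exact hp
  | succ k =>
    rw [Function.iterate_succ_apply', Ne, derivative_eq_zero, natDegree_iterate_derivative_eq]
    omega

end IsAddTorsionFree

theorem roots_eq_of_natDegree_le_card {R : Type*} [CommRing R] [IsDomain R] {p : R[X]}
    (hp : p ≠ 0) {s : Finset R} (hs : ∀ x ∈ s, p.IsRoot x) (hcard : p.natDegree ≤ s.card) :
    p.roots = s.val := by
  have hle : s.val ≤ p.roots :=
    (Multiset.le_iff_subset s.nodup).2 fun x hx => (mem_roots hp).2 (hs x hx)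
  exact (Multiset.eq_of_le_of_card_le hle ((card_roots' p).trans hcard)).symm

theorem eval_derivative_ne_zero_of_nodup_roots {R : Type*} [CommRing R] [IsDomain R]
    {p : R[X]} (hp : p ≠ 0) (hnodup : p.roots.Nodup) {x : R} (hx : p.IsRoot x) :
    (derivative p).eval x ≠ 0 := fun hx' => by
  classical
  have hmult : 1 < p.rootMultiplicity x := (one_lt_rootMultiplicity_iff_isRoot hp).2 ⟨hx, hx'⟩
  rw [← count_roots] at hmult
  exact hmult.not_ge (Multiset.nodup_iff_count_le_one.1 hnodup x)

theorem card_roots_Ioo_lt_derivative {p : ℝ[X]} (hp' : derivative p ≠ 0) {a b : ℝ}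
    (hab : a < b) (ha : p.IsRoot a) (hb : p.IsRoot b) :
    (p.roots.toFinset.filter (· ∈ Set.Ioo a b)).card <
      ((derivative p).roots.toFinset.filter (· ∈ Set.Ioo a b)).card := by
  have hp : p ≠ 0 := fun h => hp' (by rw [h, derivative_zero])
  set s := p.roots.toFinset.filter (· ∈ Set.Ioo a b)
  have ha_notMem : a ∉ insert b s := by simp [s, hab.ne]
  have hb_notMem : b ∉ s := by simp [s]
  have hinterleaved := Finset.card_le_of_interleaved (s := insert a (insert b s))
    (t := (derivative p).roots.toFinset.filter (· ∈ Set.Ioo a b)) <| by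
    have hmem : ∀ x ∈ insert a (insert b s), p.IsRoot x ∧ x ∈ Set.Icc a b := by
      simp only [Finset.mem_insert, s, Finset.mem_filter, Multiset.mem_toFinset, mem_roots hp]
      rintro x (rfl | rfl | ⟨hx, hxa, hxb⟩)
      exacts [⟨ha, le_rfl, hab.le⟩, ⟨hb, hab.le, le_rfl⟩, ⟨hx, hxa.le, hxb.le⟩]
    intro x hx y hy hxy _
    obtain ⟨hx, hxa, -⟩ := hmem x hx
    obtain ⟨hy, -, hyb⟩ := hmem y hy
    obtain ⟨z, hz, hz0⟩ := exists_deriv_eq_zero hxy p.continuousOn (hx.trans hy.symm)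
    refine ⟨z, ?_, hz⟩
    rw [Polynomial.deriv] at hz0
    simp only [Finset.mem_filter, Multiset.mem_toFinset, mem_roots hp', IsRoot]
    exact ⟨hz0, hxa.trans_lt hz.1, hz.2.trans_le hyb⟩
  rw [Finset.card_insert_of_notMem ha_notMem, Finset.card_insert_of_notMem hb_notMem]
    at hinterleaved
  omega

end Polynomial

section XSqSubOnePow

variable {R : Type*} [CommRing R]

theorem monic_X_sq_sub_one : ((X : R[X]) ^ 2 - 1).Monic := by
  simpa using monic_X_pow_sub_C (1 : R) two_ne_zero

theorem natDegree_X_sq_sub_one_pow [Nontrivial R] (n : ℕ) :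
    (((X : R[X]) ^ 2 - 1) ^ n).natDegree = 2 * n := by
  have h : ((X : R[X]) ^ 2 - 1).natDegree = 2 := by
    simpa using natDegree_X_pow_sub_C (n := 2) (r := (1 : R))
  rw [monic_X_sq_sub_one.natDegree_pow n, h, mul_comm]

theorem iterate_derivative_X_sq_sub_one_pow_ne_zero [Nontrivial R] [IsAddTorsionFree R]
    {n k : ℕ} (hk : k ≤ 2 * n) : derivative^[k] (((X : R[X]) ^ 2 - 1) ^ n) ≠ 0 :=
  iterate_derivative_ne_zero (monic_X_sq_sub_one.pow n).ne_zero
    (natDegree_X_sq_sub_one_pow (R := R) n ▸ hk)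

theorem isRoot_iterate_derivative_X_sq_sub_one_pow {n k : ℕ} (hk : k < n) {a : R}
    (ha : a ^ 2 = 1) : (derivative^[k] (((X : R[X]) ^ 2 - 1) ^ n)).IsRoot a := by
  have hdvd : X - C a ∣ (X : R[X]) ^ 2 - 1 := dvd_iff_isRoot.2 (by simp [ha])
  exact dvd_iff_isRoot.1 <| (dvd_pow_self _ (Nat.sub_ne_zero_of_lt hk)).trans <|
    pow_sub_dvd_iterate_derivative_of_pow_dvd k (pow_dvd_pow_of_dvd hdvd n)

end XSqSubOnePow

theorem le_card_roots_Ioo_iterate_derivative_X_sq_sub_one_pow {n k : ℕ} (hk : k ≤ n) :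
    k ≤ ((derivative^[k] (((X : ℝ[X]) ^ 2 - 1) ^ n)).roots.toFinset.filter
      (· ∈ Set.Ioo (-1) 1)).card := by
  induction k with
  | zero => exact Nat.zero_le _
  | succ k ih =>
    have hne := iterate_derivative_X_sq_sub_one_pow_ne_zero (R := ℝ) (n := n) (k := k + 1)
      (by omega)
    rw [Function.iterate_succ_apply'] at hne ⊢
    exact (ih (by omega)).trans_lt <| card_roots_Ioo_lt_derivative hne (by norm_num)
      (isRoot_iterate_derivative_X_sq_sub_one_pow (by omega) (by norm_num))
      (isRoot_iterate_derivative_X_sq_sub_one_pow (by omega) (by norm_num))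

noncomputable def legendrePoly (n : ℕ) : ℝ[X] :=
  C (1 / ((2 : ℝ) ^ n * (n.factorial : ℝ))) * derivative^[n] (((X : ℝ[X]) ^ 2 - 1) ^ n)

theorem legendreP_eq_eval (n : ℕ) : legendreP n = fun y => (legendrePoly n).eval y := by
  ext y
  have h := congrFun (iteratedDeriv_eval (((X : ℝ[X]) ^ 2 - 1) ^ n) n) y
  simp only [eval_pow, eval_sub, eval_X, eval_one] at h
  rw [legendreP, h, legendrePoly, eval_mul, eval_C]

theorem legendrePoly_ne_zero (n : ℕ) : legendrePoly n ≠ 0 :=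
  mul_ne_zero (C_ne_zero.2 (by positivity)) (iterate_derivative_X_sq_sub_one_pow_ne_zero (by omega))

theorem exists_roots_legendrePoly_eq (n : ℕ) :
    ∃ s : Finset ℝ, s.card = n ∧ (∀ x ∈ s, x ∈ Set.Ioo (-1) 1) ∧
      (legendrePoly n).roots = s.val := by
  set p := derivative^[n] (((X : ℝ[X]) ^ 2 - 1) ^ n)
  have hp : p ≠ 0 := iterate_derivative_X_sq_sub_one_pow_ne_zero (by omega)
  have hdeg : p.natDegree = n := by
    rw [natDegree_iterate_derivative_eq, natDegree_X_sq_sub_one_pow]; omega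
  set s := p.roots.toFinset.filter (· ∈ Set.Ioo (-1) 1)
  have hcount : n ≤ s.card := le_card_roots_Ioo_iterate_derivative_X_sq_sub_one_pow le_rfl
  have hroots : p.roots = s.val := roots_eq_of_natDegree_le_card hp
    (fun x hx => (mem_roots hp).1 (Multiset.mem_toFinset.1 (Finset.mem_filter.1 hx).1))
    (hdeg.trans_le hcount)
  refine ⟨s, ?_, fun x hx => (Finset.mem_filter.1 hx).2, ?_⟩
  · exact le_antisymm (by simpa [hroots, hdeg] using card_roots' p) hcount
  · rw [legendrePoly, roots_C_mul _ (by positivity), hroots]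

theorem legendreP_roots_general (n : ℕ) :
    ∃ r : Fin n → ℝ, StrictMono r ∧
      (∀ i, r i ∈ Set.Ioo (-1 : ℝ) 1) ∧
      (∀ i, legendreP n (r i) = 0) ∧
      (∀ i, deriv (legendreP n) (r i) ≠ 0) ∧
      (∀ x : ℝ, legendreP n x = 0 → ∃ i, x = r i) := by
  obtain ⟨s, hcard, hs, hroots⟩ := exists_roots_legendrePoly_eq n
  have hne := legendrePoly_ne_zero n
  have hmem : ∀ x, (legendrePoly n).IsRoot x ↔ x ∈ s := fun x => by
    rw [← mem_roots hne, hroots, Finset.mem_val]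
  let e := s.orderIsoOfFin hcard
  simp only [legendreP_eq_eval, Polynomial.deriv, ← IsRoot.def]
  refine ⟨fun i => e i, fun i j hij => e.strictMono hij, fun i => hs _ (e i).2,
    fun i => (hmem _).2 (e i).2, fun i => ?_, fun x hx => ?_⟩
  · exact eval_derivative_ne_zero_of_nodup_roots hne (hroots ▸ s.nodup) ((hmem _).2 (e i).2)
  · obtain ⟨i, hi⟩ := e.surjective ⟨x, (hmem x).1 hx⟩
    exact ⟨i, congrArg Subtype.val hi.symm⟩

/-- For `n ≥ 1`, the degree-`n` Legendre polynomial has exactly `n` roots, all real,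
simple, and lying in the open interval `(−1, 1)`. -/
theorem legendreP_roots (n : ℕ) (hn : 1 ≤ n) :
    ∃ r : Fin n → ℝ, StrictMono r ∧
      (∀ i, r i ∈ Set.Ioo (-1 : ℝ) 1) ∧
      (∀ i, legendreP n (r i) = 0) ∧
      (∀ i, deriv (legendreP n) (r i) ≠ 0) ∧
      (∀ x : ℝ, legendreP n x = 0 → ∃ i, x = r i) :=
  legendreP_roots_general n
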